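/- arXiv:1110.2716 — 3 statements merged into one kernel-verified Lean document; each statement's English description precedes it below -/
import Mathlib

section
/- In the polynomial ring R = k[x_a : a ∈ N], for any a, a₁, b ∈ N and i ∈ [n], the identity x_b·f_{i,a,a₁} − x_{a₁}·f_{i,a,b} = x_{s(i,b,a)}·g_{i,a₁,s(i,a,b)} − x_{s(i,a,a₁)}·g_{i,s(i,a₁,a),b} holds. -/
open MvPolynomial Finset

/-- The index set `N = [r 1] × ⋯ × [r n]`, realized as dependent functions. -/
abbrev Idx {n : ℕ} (r : Fin n → ℕ) := ∀ i, Fin (r i)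

variable {n : ℕ} {r : Fin n → ℕ}

/-- The switch `s(K,a,b)`: `b i` in the components of `K`, `a i` elsewhere. -/
def sw (K : Finset (Fin n)) (a b : Idx r) : Idx r := fun i => if i ∈ K then b i else a i

/-- The distance `d(a,b) = #{i : a i ≠ b i}`. -/
def hdist (a b : Idx r) : ℕ := (univ.filter fun i => a i ≠ b i).card

/-- The truncated distance `d_t(a,b) = #{i ∈ [t] : a i ≠ b i}`. -/
def hdistT (t : ℕ) (a b : Idx r) : ℕ :=
  (univ.filter fun i : Fin n => (i : ℕ) < t ∧ a i ≠ b i).card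

/-- `c : ℕ → N` is a path of length `m` from `a` to `b` inside `S`:
consecutive elements differ in exactly one component. -/
def IsPath (S : Set (Idx r)) (a b : Idx r) (m : ℕ) (c : ℕ → Idx r) : Prop :=
  c 0 = a ∧ c m = b ∧ (∀ j ≤ m, c j ∈ S) ∧ ∀ j < m, hdist (c j) (c (j + 1)) = 1

/-- `a` and `b` are connected in `S`. -/
def Connected (S : Set (Idx r)) (a b : Idx r) : Prop := ∃ m c, IsPath S a b m c

/-- The minimal path length `pl_S(a,b)`. -/
noncomputable def pl (S : Set (Idx r)) (a b : Idx r) : ℕ :=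
  sInf {m | ∃ c, IsPath S a b m c}

/-- `S` is `t`-switchable. -/
def Switchable (t : ℕ) (S : Set (Idx r)) : Prop :=
  ∀ a ∈ S, ∀ b ∈ S, hdist a b = 2 → ∀ i : Fin n, (i : ℕ) < t →
    sw {i} a b ∈ S ∧ sw {i} b a ∈ S

/-- `S` is `t`-signed: `t`-switchable, and each connectedness class satisfies one of:
constant first `t` coordinates, pairwise distance at most 1, or path-independent
parity of path lengths. -/
def Signed (t : ℕ) (S : Set (Idx r)) : Prop :=
  Switchable t S ∧
  ∀ a ∈ S,
    (∀ b c, Connected S a b → Connected S a c → ∀ i : Fin n, (i : ℕ) < t → b i = c i) ∨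
    (∀ b c, Connected S a b → Connected S a c → hdist b c ≤ 1) ∨
    (∀ b c, Connected S a b → Connected S a c →
      ∀ m m' p p', IsPath S b c m p → IsPath S b c m' p' → m % 2 = m' % 2)

variable (k : Type*) [Field k]

/-- The generalized determinant `f_{i,a,b}`. -/
noncomputable def fdet (i : Fin n) (a b : Idx r) : MvPolynomial (Idx r) k :=
  X a * X b - X (sw {i} a b) * X (sw {i} b a)

/-- The generalized permanent `g_{i,a,b}`. -/
noncomputable def gperm (i : Fin n) (a b : Idx r) : MvPolynomial (Idx r) k :=
  X a * X b + X (sw {i} a b) * X (sw {i} b a)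

/-- The binomial `h_{S,K,a,b}`. -/
noncomputable def hbin (S : Set (Idx r)) (K : Finset (Fin n)) (a b : Idx r) :
    MvPolynomial (Idx r) k :=
  X a * X b - (-1) ^ (K.card * (pl S a b - 1)) * (X (sw K a b) * X (sw K b a))

/-- The slice permanental ideal `J^⟨t⟩`. -/
noncomputable def Jt (t : ℕ) : Ideal (MvPolynomial (Idx r) k) :=
  Ideal.span {p | ∃ (a b : Idx r) (i : Fin n),
    hdist a b = 2 ∧ (i : ℕ) < t ∧ a i ≠ b i ∧ p = gperm k i a b}

/-- The ideal `J̃^⟨t⟩_S`. -/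
noncomputable def Jtilde (t : ℕ) (S : Set (Idx r)) : Ideal (MvPolynomial (Idx r) k) :=
  Ideal.span {p | ∃ (a b : Idx r) (i : Fin n),
    Connected S a b ∧ (i : ℕ) < t ∧ a i ≠ b i ∧ p = hbin k S {i} a b}

/-- The ideal `Var^⟨t⟩_S = (x_a : a ∉ S)`. -/
noncomputable def VarIdeal (S : Set (Idx r)) : Ideal (MvPolynomial (Idx r) k) :=
  Ideal.span {p | ∃ a ∉ S, p = X a}

/-- The ideal `Q^⟨t⟩_S = Var^⟨t⟩_S + J̃^⟨t⟩_S`. -/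
noncomputable def Qideal (t : ℕ) (S : Set (Idx r)) : Ideal (MvPolynomial (Idx r) k) :=
  VarIdeal k S + Jtilde k t S

/-- The ideal `Ĵ^⟨t⟩`. -/
noncomputable def Jhat (t : ℕ) : Ideal (MvPolynomial (Idx r) k) :=
  Ideal.span {p | ∃ (a b : Idx r) (i : Fin n),
    hdist a b = 3 ∧ hdistT t a b = 3 ∧ (i : ℕ) < t ∧ a i ≠ b i ∧ p = gperm k i a b}

/-- `S` is a maximal `t`-signed set. -/
noncomputable def MaximalSigned (t : ℕ) (S : Set (Idx r)) : Prop :=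
  Signed t S ∧ ∀ T : Set (Idx r), Signed t T → S ⊆ T → Qideal k t S ≤ Qideal k t T

lemma sw_sw_left (K : Finset (Fin n)) (a b c : Idx r) : sw K (sw K a b) c = sw K a c := by
  funext j; simp only [sw]; split_ifs <;> rfl

lemma sw_sw_right (K : Finset (Fin n)) (a b c : Idx r) : sw K a (sw K b c) = sw K a c := by
  funext j; simp only [sw]; split_ifs <;> rfl

/-- the basic determinant/permanent identity. -/
theorem stmt2 (a a₁ b : Idx r) (i : Fin n) :
    X b * fdet k i a a₁ - X a₁ * fdet k i a b =
      X (sw {i} b a) * gperm k i a₁ (sw {i} a b) -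
        X (sw {i} a a₁) * gperm k i (sw {i} a₁ a) b := by
  -- The monomial `x_{s(i,b,a)} x_{s(i,a₁,b)} x_{s(i,a,a₁)}` occurs in both permanents and cancels.
  simp only [fdet, gperm, sw_sw_left, sw_sw_right]
  ring
end

section
/- Let S be a t-switchable subset of N, and suppose a, b ∈ S are connected via a path c₀ = a, c₁, …, c_k = b in S where consecutive elements differ in exactly one component. Then for every subset K ⊆ [t], the elements s(K,a,b) and s(K,b,a) lie in S and are connected to a and b in S. -/
open MvPolynomial Finset

variable {n : ℕ} {r : Fin n → ℕ}

variable (k : Type*) [Field k]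

/-!
Switchability lets a change of a single coordinate `p < t` travel along a path. If `x, y ∈ S`
differ in one coordinate `q ≠ p` and `y` with its `p`-th coordinate replaced by `v` lies in `S`,
then that element and `x` are at distance two, and switching coordinate `p` between them puts `x`
with its `p`-th coordinate replaced by `v` into `S`. Carrying the `p`-th coordinate of `b` back
along a path from `b` to `a` shows that `a` with that coordinate taken from `b` lies in `S` and is
connected to both `a` and `b`; switching the coordinates of `K` one at a time gives the theorem.
-/

open Function Relation

section HammingDist

variable {ι : Type*} [Fintype ι] [DecidableEq ι] {β : ι → Type*} [∀ i, DecidableEq (β i)]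

lemma hammingDist_update_update_le (x y : ∀ i, β i) (p : ι) (v : β p) :
    hammingDist (update x p v) (update y p v) ≤ hammingDist x y := by
  refine card_le_card fun i => ?_
  rcases eq_or_ne i p with rfl | hip
  · simp
  · simp [hip]

lemma hammingDist_update_self_le_one (x : ∀ i, β i) (p : ι) (v : β p) :
    hammingDist x (update x p v) ≤ 1 := by
  refine (card_le_card (t := {p}) fun i => ?_).trans_eq (card_singleton p)
  rcases eq_or_ne i p with rfl | hip
  · simp
  · simp [hip]

lemma hammingDist_update_left_of_eq {x y : ∀ i, β i} {p : ι} {v : β p} (hp : x p = y p)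
    (hv : v ≠ x p) : hammingDist (update x p v) y = hammingDist x y + 1 := by
  have : univ.filter (fun i => update x p v i ≠ y i) =
      insert p (univ.filter fun i => x i ≠ y i) := by
    ext i
    rcases eq_or_ne i p with rfl | hip
    · simp [← hp, hv]
    · simp [hip]
  rw [hammingDist, this, card_insert_of_notMem (by simp [hp])]
  rfl

lemma update_eq_update_of_hammingDist_le_one {x y : ∀ i, β i} (h : hammingDist x y ≤ 1)
    {p : ι} (hp : x p ≠ y p) (v : β p) : update x p v = update y p v := by
  ext i
  rcases eq_or_ne i p with rfl | hip
  · simp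
  · simp only [update_of_ne hip]
    by_contra hi
    exact hip (card_le_one.mp h i (by simpa using hi) p (by simpa using hp))

end HammingDist

lemma hdist_eq_hammingDist (a b : Idx r) : hdist a b = hammingDist a b := rfl

lemma sw_empty (a b : Idx r) : sw ∅ a b = a := rfl

lemma sw_insert (p : Fin n) (K : Finset (Fin n)) (a b : Idx r) :
    sw (insert p K) a b = update (sw K a b) p (b p) := by
  ext i
  rcases eq_or_ne i p with rfl | hip
  · simp [sw]
  · simp [sw, hip]

lemma sw_singleton (p : Fin n) (a b : Idx r) : sw {p} a b = update a p (b p) := by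
  rw [← LawfulSingleton.insert_empty_eq, sw_insert, sw_empty]

/-- Allowing distance zero makes `Connected S` the transitive closure of `Near S`. -/
def Near (S : Set (Idx r)) (x y : Idx r) : Prop := x ∈ S ∧ y ∈ S ∧ hdist x y ≤ 1

variable {S : Set (Idx r)} {a b c : Idx r}

lemma Near.symm (h : Near S a b) : Near S b a :=
  ⟨h.2.1, h.1, by rw [hdist_eq_hammingDist, hammingDist_comm]; exact h.2.2⟩

lemma connected_self (ha : a ∈ S) : Connected S a a :=
  ⟨0, fun _ => a, rfl, rfl, fun _ _ => ha, fun _ h => absurd h (Nat.not_lt_zero _)⟩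

lemma Connected.snoc (h : Connected S a b) (hc : c ∈ S) (hbc : hdist b c = 1) :
    Connected S a c := by
  obtain ⟨m, p, rfl, rfl, hmem, hstep⟩ := h
  refine ⟨m + 1, fun j => if j ≤ m then p j else c, by simp, by simp, fun j hj => ?_,
    fun j hj => ?_⟩
  · dsimp only
    split_ifs with h
    exacts [hmem j h, hc]
  · rcases Nat.lt_or_eq_of_le (Nat.le_of_lt_succ hj) with hj | rfl
    · simpa [hj.le, Nat.succ_le_of_lt hj] using hstep j hj
    · simpa using hbc

lemma Connected.snoc_near (h : Connected S a b) (hbc : Near S b c) : Connected S a c := by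
  rcases eq_or_ne b c with rfl | hne
  · exact h
  · exact h.snoc hbc.2.1 (hbc.2.2.antisymm (hammingDist_pos.mpr hne))

lemma connected_iff_transGen : Connected S a b ↔ TransGen (Near S) a b := by
  constructor
  · rintro ⟨m, c, rfl, rfl, hmem, hstep⟩
    suffices ∀ j ≤ m, TransGen (Near S) (c 0) (c j) from this m le_rfl
    intro j hj
    induction j with
    | zero => exact .single ⟨hmem 0 hj, hmem 0 hj, by simp [hdist_eq_hammingDist]⟩
    | succ j ih =>
      exact (ih (by omega)).tail ⟨hmem j (by omega), hmem (j + 1) hj, (hstep j hj).le⟩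
  · intro h
    induction h with
    | single hab => exact (connected_self hab.1).snoc_near hab
    | tail _ hbc ih => exact ih.snoc_near hbc

lemma Connected.symm (h : Connected S a b) : Connected S b a := by
  rw [connected_iff_transGen] at *
  exact TransGen.mono (fun _ _ => Near.symm) _ _ (transGen_swap.mpr h)

lemma Connected.trans (hab : Connected S a b) (hbc : Connected S b c) : Connected S a c := by
  rw [connected_iff_transGen] at *
  exact hab.trans hbc

lemma Connected.mem_left (h : Connected S a b) : a ∈ S := by
  obtain ⟨_, hac, -⟩ := TransGen.head'_iff.mp (connected_iff_transGen.mp h)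
  exact hac.1

lemma Connected.mem_right (h : Connected S a b) : b ∈ S := h.symm.mem_left

lemma Near.connected (h : Near S a b) : Connected S a b :=
  connected_iff_transGen.mpr (.single h)

variable {t : ℕ} {p : Fin n}

lemma Near.update_update (hS : Switchable t S) (hp : (p : ℕ) < t) (h : Near S a b) {v : Fin (r p)}
    (hb : update b p v ∈ S) : Near S (update a p v) (update b p v) := by
  refine ⟨?_, hb, (hammingDist_update_update_le a b p v).trans h.2.2⟩
  by_cases hv : v = a p
  · simpa [hv] using h.1
  by_cases hab : a p = b p
  · rcases eq_or_ne a b with rfl | hne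
    · exact hb
    have h1 : hammingDist a b = 1 := h.2.2.antisymm (hammingDist_pos.mpr hne)
    have h2 : hdist (update b p v) a = 2 := by
      rw [hdist_eq_hammingDist, hammingDist_update_left_of_eq hab.symm (hab ▸ hv),
        hammingDist_comm, h1]
    simpa [sw_singleton] using (hS _ hb _ h.1 h2 p hp).2
  · rwa [update_eq_update_of_hammingDist_le_one h.2.2 hab]

lemma Connected.update_update (hS : Switchable t S) (hp : (p : ℕ) < t) (h : Connected S a b)
    {v : Fin (r p)} (hb : update b p v ∈ S) : Connected S (update a p v) (update b p v) := by
  rw [connected_iff_transGen] at *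
  induction h using TransGen.head_induction_on with
  | single hab => exact .single (hab.update_update hS hp hb)
  | head hac _ ih =>
    exact .head (hac.update_update hS hp (connected_iff_transGen.mpr ih).mem_left) ih

lemma Connected.update_of_lt (hS : Switchable t S) (hp : (p : ℕ) < t) (h : Connected S a b) :
    Connected S a (update a p (b p)) ∧ Connected S b (update a p (b p)) := by
  have hb : Connected S (update a p (b p)) b := by
    simpa using h.update_update hS hp (v := b p) (by simpa using h.mem_right)
  have hnear : Near S a (update a p (b p)) :=
    ⟨h.mem_left, hb.mem_left, hammingDist_update_self_le_one a p _⟩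
  exact ⟨hnear.connected, hb.symm⟩

lemma Connected.connected_sw (hS : Switchable t S) {K : Finset (Fin n)}
    (hK : ∀ i ∈ K, (i : ℕ) < t) (h : Connected S a b) :
    Connected S a (sw K a b) ∧ Connected S b (sw K a b) := by
  induction K using Finset.induction_on with
  | empty => exact ⟨connected_self h.mem_left, h.symm⟩
  | insert p K _ ih =>
    obtain ⟨ha, hb⟩ := ih fun i hi => hK i (mem_insert_of_mem hi)
    obtain ⟨hsw, hb'⟩ := hb.symm.update_of_lt hS (hK p (mem_insert_self p K))
    rw [sw_insert]
    exact ⟨ha.trans hsw, hb'⟩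

theorem stmt5_general (t : ℕ) (S : Set (Idx r)) (hS : Switchable t S)
    (a b : Idx r) (hab : Connected S a b)
    (K : Finset (Fin n)) (hK : ∀ i ∈ K, (i : ℕ) < t) :
    sw K a b ∈ S ∧ sw K b a ∈ S ∧
    Connected S a (sw K a b) ∧ Connected S a (sw K b a) ∧
    Connected S b (sw K a b) ∧ Connected S b (sw K b a) := by
  obtain ⟨ha_ab, hb_ab⟩ := hab.connected_sw hS hK
  obtain ⟨hb_ba, ha_ba⟩ := hab.symm.connected_sw hS hK
  exact ⟨ha_ab.mem_right, hb_ba.mem_right, ha_ab, ha_ba, hb_ab, hb_ba⟩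

/-- switches of connected elements of a `t`-switchable set stay in the set
and remain connected to both endpoints. -/
theorem stmt5 (t : ℕ) (ht : t ≤ n) (S : Set (Idx r)) (hS : Switchable t S)
    (a b : Idx r) (hab : Connected S a b)
    (K : Finset (Fin n)) (hK : ∀ i ∈ K, (i : ℕ) < t) :
    sw K a b ∈ S ∧ sw K b a ∈ S ∧
    Connected S a (sw K a b) ∧ Connected S a (sw K b a) ∧
    Connected S b (sw K a b) ∧ Connected S b (sw K b a) :=
  stmt5_general t S hS a b hab K hK
end

section
/- Let S be a t-signed set and a, b connected elements of S. Suppose K, L ⊆ {i ∈ [t] : a_i ≠ b_i} are two subsets such that the monomials x_{s(K,a,b)}·x_{s(K,b,a)} and x_{s(L,a,b)}·x_{s(L,b,a)} coincide. Then h_{S,K,a,b} = h_{S,L,a,b}, i.e., the binomial h is well defined. -/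
open MvPolynomial Finset

variable {n : ℕ} {r : Fin n → ℕ}

variable (k : Type*) [Field k]

/-! In the crossed case `s(K,a,b) = s(L,b,a)` the sets `K` and `L` partition the coordinates in
which `a` and `b` differ, so the two signs agree as soon as `pl_S(a,b) ≡ d(a,b) (mod 2)`. Only the
parity condition on connectedness classes makes this nontrivial. There, switchability lets a step
in a coordinate `i < t` be moved past steps in other coordinates. Bring the first such step to the
front of a path: either it moves `i` to its final value, and induction applies to the rest, or the
path returns to coordinate `i` later. Bringing that return forward produces two consecutive steps
in coordinate `i`. They cancel, since merging them would give a path of the wrong parity. -/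

section Hamming

variable {u v x y : Idx r} {i j : Fin n}

lemma hdist_eq_one_iff : hdist u v = 1 ↔ ∃ i, ∀ j, u j ≠ v j ↔ j = i := by
  simp only [hdist, card_eq_one, Finset.ext_iff, mem_filter, mem_univ, true_and,
    mem_singleton]

lemma eq_of_hdist_eq_one (h : hdist u v = 1) (hi : u i ≠ v i) (hj : j ≠ i) : u j = v j := by
  obtain ⟨i₀, hi₀⟩ := hdist_eq_one_iff.mp h
  by_contra hne
  exact hj (((hi₀ j).mp hne).trans ((hi₀ i).mp hi).symm)

lemma hdist_eq_one_of (hi : u i ≠ v i) (h : ∀ j ≠ i, u j = v j) : hdist u v = 1 :=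
  hdist_eq_one_iff.mpr ⟨i, fun j => ⟨fun hne => by_contra fun hj => hne (h j hj), fun hj => hj ▸ hi⟩⟩

lemma hdist_eq_two_of (hij : i ≠ j) (hi : u i ≠ v i) (hj : u j ≠ v j)
    (h : ∀ l, l ≠ i → l ≠ j → u l = v l) : hdist u v = 2 := by
  have hs : (univ.filter fun l => u l ≠ v l) = {i, j} := by
    ext l
    by_cases hli : l = i
    · simp [hli, hi]
    by_cases hlj : l = j
    · simp [hlj, hj]
    · simp [hli, hlj, h l hli hlj]
  rw [hdist, hs, card_pair hij]

lemma hdist_eq_hdist_add_one (hu : ∀ j ≠ i, x j = u j) (hxy : x i ≠ y i) (huy : u i = y i) :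
    hdist x y = hdist u y + 1 := by
  have hs : (univ.filter fun l => x l ≠ y l) = insert i (univ.filter fun l => u l ≠ y l) := by
    ext l
    by_cases hl : l = i
    · simp [hl, hxy]
    · simp [hl, hu l hl]
  rw [hdist, hs, card_insert_of_notMem (by simp [huy]), hdist]

end Hamming

section Paths

variable {S : Set (Idx r)} {x y z : Idx r} {m : ℕ} {c : ℕ → Idx r}

lemma isPath_const (hx : x ∈ S) : IsPath S x x 0 (fun _ => x) :=
  ⟨rfl, rfl, fun _ _ => hx, fun _ hj => absurd hj (Nat.not_lt_zero _)⟩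

lemma IsPath.start_mem (h : IsPath S x y m c) : x ∈ S := h.1 ▸ h.2.2.1 0 (Nat.zero_le _)

lemma IsPath.tail (h : IsPath S x y (m + 1) c) : IsPath S (c 1) y m (fun j => c (j + 1)) :=
  ⟨rfl, h.2.1, fun j hj => h.2.2.1 _ (by omega), fun j hj => h.2.2.2 _ (by omega)⟩

lemma IsPath.cons (h : IsPath S x y m c) (hz : z ∈ S) (hzx : hdist z x = 1) :
    IsPath S z y (m + 1) (fun j => if j = 0 then z else c (j - 1)) := by
  obtain ⟨h0, hm, hmem, hstep⟩ := h
  refine ⟨rfl, by simpa using hm, fun j hj => ?_, fun j hj => ?_⟩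
  · rcases j with _ | j
    · exact hz
    · exact hmem j (by omega)
  · rcases j with _ | j
    · simpa [h0] using hzx
    · simpa using hstep j (by omega)

lemma Connected.snoc_s8 (h : Connected S x y) (hz : z ∈ S) (hyz : hdist y z = 1) :
    Connected S x z := by
  obtain ⟨m, c, h0, hm, hmem, hstep⟩ := h
  refine ⟨m + 1, Function.update c (m + 1) z, ?_, by simp, fun j hj => ?_, fun j hj => ?_⟩
  · simpa [Function.update_apply] using h0
  · rcases eq_or_ne j (m + 1) with rfl | hj'
    · simpa using hz
    · simpa [Function.update_of_ne hj'] using hmem j (by omega)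
  · rcases eq_or_ne j m with rfl | hj'
    · simpa [hm] using hyz
    · simpa [Function.update_of_ne (by omega : j ≠ m + 1),
        Function.update_of_ne (by omega : j + 1 ≠ m + 1)] using hstep j (by omega)

lemma Connected.of_isPath (hx : Connected S z x) (h : IsPath S x y m c) : Connected S z y := by
  have : ∀ j ≤ m, Connected S z (c j) := by
    intro j hj
    induction j with
    | zero => simpa [h.1] using hx
    | succ j ih => exact (ih (by omega)).snoc_s8 (h.2.2.1 _ hj) (h.2.2.2 j hj)
  simpa [h.2.1] using this m le_rfl

lemma Connected.refl (hx : x ∈ S) : Connected S x x := ⟨0, _, isPath_const hx⟩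

lemma apply_eq_of_forall_lt_apply_eq {β : Type*} (f : ℕ → β) (h : ∀ q < m, f q = f (q + 1)) :
    f m = f 0 := by
  induction m with
  | zero => rfl
  | succ m ih => rw [← h m (by omega), ih fun q hq => h q (by omega)]

end Paths

section StepReordering

variable {t : ℕ} {S : Set (Idx r)} {x y : Idx r} {m : ℕ} {c : ℕ → Idx r} {i : Fin n}

@[simp]
lemma sw_singleton_self (u v : Idx r) : sw {i} u v i = v i := by simp [sw]

lemma sw_singleton_of_ne (u v : Idx r) {j : Fin n} (hj : j ≠ i) : sw {i} u v j = u j := by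
  simp [sw, hj]

/-- The new middle point moves the step in coordinate `i` one position earlier, past a step in
another coordinate. -/
lemma IsPath.swap_steps (hsw : Switchable t S) (hc : IsPath S x y m c) {p : ℕ} (hp : p + 2 ≤ m)
    (hi : (i : ℕ) < t) (hstay : c p i = c (p + 1) i) (hmove : c (p + 1) i ≠ c (p + 2) i) :
    IsPath S x y m (Function.update c (p + 1) (sw {i} (c p) (c (p + 2)))) := by
  obtain ⟨h0, hm, hmem, hstep⟩ := hc
  obtain ⟨j, hj⟩ := hdist_eq_one_iff.mp (hstep p (by omega))
  have hmove_j : c p j ≠ c (p + 1) j := (hj j).mpr rfl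
  have hji : j ≠ i := fun h => hmove_j (h ▸ hstay)
  have hfix_j : ∀ l ≠ j, c p l = c (p + 1) l := fun l hl => by_contra fun h => hl ((hj l).mp h)
  have hfix_i : ∀ l ≠ i, c (p + 1) l = c (p + 2) l := fun l =>
    eq_of_hdist_eq_one (hstep _ (by omega)) hmove
  have hd2 : hdist (c p) (c (p + 2)) = 2 := by
    refine hdist_eq_two_of hji.symm (hstay ▸ hmove) ?_ fun l hli hlj => ?_
    · rwa [← hfix_i j hji]
    · rw [hfix_j l hlj, hfix_i l hli]
  set w := sw {i} (c p) (c (p + 2))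
  have hw_i : w i = c (p + 2) i := sw_singleton_self _ _
  have hw_ne : ∀ l ≠ i, w l = c p l := fun l => sw_singleton_of_ne _ _
  refine ⟨?_, ?_, fun l hl => ?_, fun l hl => ?_⟩
  · rwa [Function.update_of_ne (by omega)]
  · rwa [Function.update_of_ne (by omega)]
  · rcases eq_or_ne l (p + 1) with rfl | hl'
    · simpa using (hsw _ (hmem p (by omega)) _ (hmem _ hp) hd2 i hi).1
    · simpa [Function.update_of_ne hl'] using hmem l hl
  · rcases eq_or_ne l p with rfl | hlp
    · simp only [Function.update_of_ne (by omega : l ≠ l + 1), Function.update_self]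
      refine hdist_eq_one_of (i := i) ?_ fun l hl => (hw_ne l hl).symm
      rw [hw_i, hstay]
      exact hmove
    rcases eq_or_ne l (p + 1) with rfl | hlp'
    · simp only [Function.update_self, Function.update_of_ne (by omega : p + 1 + 1 ≠ p + 1)]
      refine hdist_eq_one_of (i := j) ?_ fun l hl => ?_
      · rwa [hw_ne j hji, ← hfix_i j hji]
      · rcases eq_or_ne l i with rfl | hli
        · exact hw_i
        · rw [hw_ne l hli, hfix_j l hl, hfix_i l hli]
    · rw [Function.update_of_ne hlp', Function.update_of_ne (by omega)]
      exact hstep l hl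

lemma IsPath.exists_first_step (hsw : Switchable t S) (hi : (i : ℕ) < t) {q : ℕ}
    (hq : q < m) (hc : IsPath S x y m c) (hmove : c q i ≠ c (q + 1) i) :
    ∃ c', IsPath S x y m c' ∧ x i ≠ c' 1 i := by
  induction q generalizing c with
  | zero => exact ⟨c, hc, hc.1 ▸ hmove⟩
  | succ q ih =>
    by_cases hstay : c q i = c (q + 1) i
    · refine ih (by omega) (hc.swap_steps hsw hq hi hstay hmove) ?_
      simpa [hstay] using hmove
    · exact ih (by omega) hc hstay

end StepReordering

section Parity

variable {t : ℕ} {S : Set (Idx r)} {a x y : Idx r} {m : ℕ} {c : ℕ → Idx r} {i : Fin n}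

def HasPathParity (S : Set (Idx r)) (a : Idx r) : Prop :=
  ∀ b c, Connected S a b → Connected S a c →
    ∀ m m' p p', IsPath S b c m p → IsPath S b c m' p' → m % 2 = m' % 2

lemma IsPath.apply_one_eq_of_ne (hc : IsPath S x y (m + 1) c) (hx : x i ≠ c 1 i) {j : Fin n}
    (hj : j ≠ i) : x j = c 1 j :=
  hc.1 ▸ eq_of_hdist_eq_one (hc.2.2.2 0 (by omega)) (hc.1 ▸ hx) hj

lemma IsPath.exists_length_sub_two (hsw : Switchable t S) (hpar : HasPathParity S a)
    (hx : Connected S a x) (hi : (i : ℕ) < t) (hc : IsPath S x y (m + 2) c)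
    (hx1 : x i ≠ c 1 i) (h1y : c 1 i ≠ y i) : ∃ d, IsPath S x y m d := by
  have htail := hc.tail
  obtain ⟨q, hq, hmove⟩ : ∃ q < m + 1, c (q + 1) i ≠ c (q + 1 + 1) i := by
    by_contra! h
    exact h1y (htail.2.1 ▸ (apply_eq_of_forall_lt_apply_eq (fun j => c (j + 1) i) h).symm)
  obtain ⟨d, hd, hd1⟩ := htail.exists_first_step hsw hi hq hmove
  have hxd : ∀ j ≠ i, x j = d 1 j := fun j hj =>
    (hc.apply_one_eq_of_ne hx1 hj).trans (hd.apply_one_eq_of_ne hd1 hj)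
  by_cases hback : x i = d 1 i
  · have : d 1 = x := funext fun j => by
      rcases eq_or_ne j i with rfl | hj
      · exact hback.symm
      · exact (hxd j hj).symm
    exact ⟨_, this ▸ hd.tail⟩
  · have hmerged := hd.tail.cons hc.start_mem (hdist_eq_one_of hback hxd)
    have := hpar x y hx (hx.of_isPath hc) _ _ _ _ hc hmerged
    omega

theorem IsPath.length_mod_two (hsw : Switchable t S) (hpar : HasPathParity S a)
    (hx : Connected S a x) (hc : IsPath S x y m c) (hout : ∀ j : Fin n, t ≤ (j : ℕ) → x j = y j) :
    m % 2 = hdist x y % 2 := by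
  induction m using Nat.strong_induction_on generalizing x c with
  | _ m ih =>
  by_cases hmoves : ∃ q < m, ∃ i : Fin n, (i : ℕ) < t ∧ c q i ≠ c (q + 1) i
  · obtain ⟨q, hq, i, hi, hmove⟩ := hmoves
    obtain ⟨c', hc', hx1⟩ := hc.exists_first_step hsw hi hq hmove
    obtain ⟨m, rfl⟩ : ∃ m', m = m' + 1 := ⟨m - 1, by omega⟩
    have hxu : ∀ j ≠ i, x j = c' 1 j := fun j => hc'.apply_one_eq_of_ne hx1
    have hu : Connected S a (c' 1) :=
      hx.snoc_s8 (hc'.2.2.1 1 (by omega)) (hc'.1 ▸ hc'.2.2.2 0 (by omega))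
    by_cases h1y : c' 1 i = y i
    · have hout' : ∀ j : Fin n, t ≤ (j : ℕ) → c' 1 j = y j := fun j hj =>
        (hxu j (by rintro rfl; omega)).symm.trans (hout j hj)
      have := ih m (by omega) hu hc'.tail hout'
      rw [hdist_eq_hdist_add_one hxu (h1y ▸ hx1) h1y]
      omega
    · rcases m with _ | m
      · exact (h1y (congrFun hc'.tail.2.1 i)).elim
      · obtain ⟨d, hd⟩ := hc'.exists_length_sub_two hsw hpar hx hi hx1 h1y
        have := ih m (by omega) hx hd hout
        omega
  · push Not at hmoves
    have hxy : x = y := funext fun j => by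
      rcases lt_or_ge (j : ℕ) t with hj | hj
      · rw [← hc.1, ← hc.2.1]
        exact (apply_eq_of_forall_lt_apply_eq (fun q => c q j) fun q hq => hmoves q hq j hj).symm
      · exact hout j hj
    subst hxy
    simpa [hdist] using hpar x x hx hx _ _ _ _ hc (isPath_const hc.start_mem)

end Parity

lemma MvPolynomial.X_mul_X_eq_X_mul_X_iff {σ R : Type*} [CommSemiring R] [Nontrivial R]
    {u v p q : σ} :
    (X u * X v : MvPolynomial σ R) = X p * X q ↔ u = p ∧ v = q ∨ u = q ∧ v = p := by
  simp only [X, monomial_mul, mul_one, monomial_left_inj (one_ne_zero' R),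
    Finsupp.single_add_single_eq_single_add_single one_ne_zero one_ne_zero, true_and,
    Nat.add_eq_zero_iff, one_ne_zero, false_and, and_false, or_false]

lemma neg_one_pow_mul_sub_one_eq {R : Type*} [Ring R] {k l p : ℕ}
    (h : p % 2 = (k + l) % 2) : (-1 : R) ^ (k * (p - 1)) = (-1) ^ (l * (p - 1)) := by
  rw [neg_one_pow_eq_pow_mod_two, neg_one_pow_eq_pow_mod_two (n := l * _), Nat.mul_mod,
    Nat.mul_mod l]
  rcases Nat.mod_two_eq_zero_or_one k with hk | hk <;>
    rcases Nat.mod_two_eq_zero_or_one l with hl | hl <;>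
    rcases Nat.mod_two_eq_zero_or_one (p - 1) with hp | hp <;>
    simp [hk, hl, hp] <;> omega

section Switches

variable {a b : Idx r} {K L : Finset (Fin n)}

lemma eq_of_sw_eq_sw (hK : ∀ i ∈ K, a i ≠ b i) (hL : ∀ i ∈ L, a i ≠ b i)
    (h : sw K a b = sw L a b) : K = L := by
  ext i
  have hi := congrFun h i
  have hKi := hK i
  have hLi := hL i
  simp only [sw] at hi
  by_cases hiK : i ∈ K <;> by_cases hiL : i ∈ L <;> simp_all

lemma filter_ne_eq_union_of_sw_eq_sw (hK : ∀ i ∈ K, a i ≠ b i) (hL : ∀ i ∈ L, a i ≠ b i)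
    (h : sw K a b = sw L b a) : univ.filter (fun i => a i ≠ b i) = K ∪ L := by
  ext i
  have hi := congrFun h i
  have hKi := hK i
  have hLi := hL i
  simp only [sw] at hi
  by_cases hiK : i ∈ K <;> by_cases hiL : i ∈ L <;> simp_all

lemma disjoint_of_sw_eq_sw (hK : ∀ i ∈ K, a i ≠ b i) (h : sw K a b = sw L b a) :
    Disjoint K L := by
  refine disjoint_left.mpr fun i hiK hiL => hK i hiK ?_
  simpa [sw, hiK, hiL] using (congrFun h i).symm

end Switches

section MinimalPathLength

variable {t : ℕ} {S : Set (Idx r)} {a b : Idx r} {m : ℕ} {c : ℕ → Idx r}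

lemma pl_le (h : IsPath S a b m c) : pl S a b ≤ m := Nat.sInf_le ⟨c, h⟩

lemma Connected.exists_isPath_pl (h : Connected S a b) : ∃ c, IsPath S a b (pl S a b) c :=
  Nat.sInf_mem (s := {m | ∃ c, IsPath S a b m c}) (by obtain ⟨m, c, hc⟩ := h; exact ⟨m, c, hc⟩)

lemma pl_self (ha : a ∈ S) : pl S a a = 0 := Nat.le_zero.mp (pl_le (isPath_const ha))

lemma pl_eq_one (hab : Connected S a b) (hd : hdist a b = 1) : pl S a b = 1 := by
  obtain ⟨c, hc⟩ := hab.exists_isPath_pl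
  refine le_antisymm (pl_le ((isPath_const (hc.2.1 ▸ hc.2.2.1 _ le_rfl)).cons hc.start_mem hd))
    (Nat.one_le_iff_ne_zero.mpr fun h0 => ?_)
  rw [h0] at hc
  rw [← hc.1, hc.2.1] at hd
  simp [hdist] at hd

theorem pl_mod_two_eq (hS : Signed t S) (hab : Connected S a b)
    (hout : ∀ j : Fin n, t ≤ (j : ℕ) → a j = b j) : pl S a b % 2 = hdist a b % 2 := by
  obtain ⟨c, hc⟩ := hab.exists_isPath_pl
  have ha := hc.start_mem
  rcases eq_or_ne a b with rfl | hne
  · simp [pl_self ha, hdist]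
  have hd : hdist a b ≠ 0 := fun h => hne (hammingDist_eq_zero.mp h)
  rcases hS.2 a ha with hconst | hnear | hpar
  · exact (hne (_root_.funext fun j => (lt_or_ge (j : ℕ) t).elim
      (hconst a b (Connected.refl ha) hab j) (hout j))).elim
  · have hd1 : hdist a b = 1 := by have := hnear a b (Connected.refl ha) hab; omega
    rw [pl_eq_one hab hd1, hd1]
  · exact hc.length_mod_two hS.1 hpar (Connected.refl ha) hout

end MinimalPathLength

theorem stmt8 (t : ℕ) (S : Set (Idx r)) (hS : Signed t S)
    (a b : Idx r) (hab : Connected S a b) (K L : Finset (Fin n))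
    (hK : ∀ i ∈ K, (i : ℕ) < t ∧ a i ≠ b i) (hL : ∀ i ∈ L, (i : ℕ) < t ∧ a i ≠ b i)
    (hmon : (X (sw K a b) * X (sw K b a) : MvPolynomial (Idx r) k) =
      X (sw L a b) * X (sw L b a)) :
    hbin k S K a b = hbin k S L a b := by
  have hKab : ∀ i ∈ K, a i ≠ b i := fun i hi => (hK i hi).2
  have hLab : ∀ i ∈ L, a i ≠ b i := fun i hi => (hL i hi).2
  rcases X_mul_X_eq_X_mul_X_iff.mp hmon with ⟨hsame, -⟩ | ⟨hcross, -⟩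
  · rw [eq_of_sw_eq_sw hKab hLab hsame]
  have hD := filter_ne_eq_union_of_sw_eq_sw hKab hLab hcross
  have hout : ∀ j : Fin n, t ≤ (j : ℕ) → a j = b j := fun j hj => by
    by_contra hne
    have hj' : j ∈ K ∪ L := hD ▸ mem_filter.mpr ⟨mem_univ j, hne⟩
    rcases mem_union.mp hj' with hjK | hjL
    · exact absurd (hK j hjK).1 (by omega)
    · exact absurd (hL j hjL).1 (by omega)
  have hcard : hdist a b = K.card + L.card := by
    rw [hdist, hD, card_union_of_disjoint (disjoint_of_sw_eq_sw hKab hcross)]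
  rw [hbin, hbin, hmon, neg_one_pow_mul_sub_one_eq (hcard ▸ pl_mod_two_eq hS hab hout)]
end
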